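/- Let k be an algebraically closed field of positive characteristic p, and let U be a connected normal k-scheme of finite type with only constant global units (H⁰(U, O_U^×) = k^×). Then a stratified line bundle L = (L_n, σ_n)_{n∈ℕ} on U (where σ_n : F^* L_{n+1} ≅ L_n and F is the absolute Frobenius) is determined up to isomorphism of stratified bundles by the isomorphism classes of the line bundles L_n: if M = (M_n, τ_n) is another stratified line bundle with L_n ≅ M_n as O_U-modules for all n, then L ≅ M as stratified line bundles. -/

import Mathlib

/-!
The isomorphisms `fₙ : Lₙ ≅ Mₙ` are built inductively. Given `fₙ`, the discrepancy between
`σₙ ≫ fₙ` and `F(uₙ₊₁) ≫ τₙ` is an automorphism of `F Lₙ₊₁`, i.e. a constant `λ ∈ k^×`.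
Since `F` raises constants to the `p`-th power and `k` is algebraically closed, `λ = F(λ^{1/p})`,
so `fₙ₊₁ := λ^{1/p} · uₙ₊₁` is compatible with `σₙ`, `τₙ` and `fₙ`.
-/

open CategoryTheory

theorem IsAlgClosed.pow_surjective_units {k : Type*} [Field k] [IsAlgClosed k] {n : ℕ}
    (hn : n ≠ 0) : Function.Surjective fun x : kˣ => x ^ n := by
  intro x
  obtain ⟨z, hz⟩ := IsAlgClosed.exists_pow_nat_eq (x : k) (Nat.pos_of_ne_zero hn)
  have hz0 : z ≠ 0 := by
    rintro rfl
    exact x.ne_zero (by rw [← hz, zero_pow hn])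
  exact ⟨Units.mk0 z hz0, Units.ext hz⟩

namespace CategoryTheory.Functor

variable {C D : Type*} [Category C] [Category D]

theorem mapAut_surjective_of_pow (F : C ⥤ D) {G : Type*} [Monoid G] {X : C} {n : ℕ}
    (eX : Aut X ≃* G) (eFX : Aut (F.obj X) ≃* G) (hF : ∀ a, eFX (F.mapIso a) = eX a ^ n)
    (hn : Function.Surjective fun g : G => g ^ n) : Function.Surjective (mapAut X F) := by
  intro t
  obtain ⟨g, hg⟩ := hn (eFX t)
  refine ⟨eX.symm g, eFX.injective ?_⟩
  calc eFX (F.mapIso (eX.symm g)) = eX (eX.symm g) ^ n := hF _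
    _ = eFX t := by rw [MulEquiv.apply_symm_apply, ← hg]

theorem exists_mapIso_trans_eq (F : C ⥤ D) {X X' : C} {Y Y' : D} (hF : Function.Surjective (mapAut X F))
    (u : X ≅ X') (σ : F.obj X ≅ Y) (τ : F.obj X' ≅ Y') (f : Y ≅ Y') :
    ∃ g : X ≅ X', F.mapIso g ≪≫ τ = σ ≪≫ f := by
  obtain ⟨c, hc⟩ : ∃ c : X ≅ X, F.mapIso c = (σ ≪≫ f) ≪≫ (F.mapIso u ≪≫ τ).symm :=
    hF _
  refine ⟨c ≪≫ u, ?_⟩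
  rw [F.mapIso_trans, Iso.trans_assoc, hc]
  simp

theorem exists_stratified_iso (F : C ⥤ C) (L M : ℕ → C)
    (hF : ∀ n, Function.Surjective (mapAut (L (n + 1)) F))
    (σ : ∀ n, F.obj (L (n + 1)) ≅ L n) (τ : ∀ n, F.obj (M (n + 1)) ≅ M n)
    (u : ∀ n, L n ≅ M n) :
    ∃ f : ∀ n, L n ≅ M n, ∀ n, F.mapIso (f (n + 1)) ≪≫ τ n = σ n ≪≫ f n := by
  choose lift hlift using fun n (fn : L n ≅ M n) =>
    F.exists_mapIso_trans_eq (hF n) (u (n + 1)) (σ n) (τ n) fn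
  exact ⟨fun n => Nat.rec (u 0) lift n, fun n => hlift n _⟩

end CategoryTheory.Functor

theorem stmt_7_general {k : Type*} [Field k] [IsAlgClosed k] (p : ℕ) [Fact p.Prime]
    {C : Type*} [Category C] (F : C ⥤ C)
    (e : ∀ X : C, Aut X ≃* kˣ)
    (hF : ∀ (X : C) (a : Aut X), e (F.obj X) (F.mapIso a) = (e X a) ^ p)
    (L M : ℕ → C)
    (σ : ∀ n, F.obj (L (n + 1)) ≅ L n) (τ : ∀ n, F.obj (M (n + 1)) ≅ M n)
    (u : ∀ n, L n ≅ M n) :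
    ∃ f : ∀ n, L n ≅ M n, ∀ n, F.mapIso (f (n + 1)) ≪≫ τ n = σ n ≪≫ f n := by
  have hroot := IsAlgClosed.pow_surjective_units (k := k) (Fact.out : p.Prime).ne_zero
  exact F.exists_stratified_iso L M
    (fun n => F.mapAut_surjective_of_pow (e _) (e _) (hF _) hroot) σ τ u

/-- Over an algebraically closed field `k` of characteristic `p > 0`, on a connected
normal finite type `k`-scheme `U` all of whose global units are constant, a stratified
line bundle is determined up to stratified isomorphism by the isomorphism classes of its
terms.  Following Katz, a stratified line bundle is a sequence `(Lₙ, σₙ : F^*Lₙ₊₁ ≅ Lₙ)`;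
we model the groupoid of line bundles on `U` by a category `C` together with the
Frobenius pullback functor `F : C ⥤ C`, the identifications `e : Aut(L) ≃* k^×` of
automorphism groups with the (constant) global units — compatible with conjugation by
isomorphisms and such that `F` acts on automorphisms by `λ ↦ λ^p`.  Given stratified
line bundles `(L, σ)` and `(M, τ)` with `Lₙ ≅ Mₙ` for all `n`, there is an isomorphism
of stratified bundles, i.e. a family of isomorphisms compatible with `σ` and `τ`. -/
theorem stmt_7 {k : Type*} [Field k] [IsAlgClosed k] (p : ℕ) [Fact p.Prime] [CharP k p]
    {C : Type*} [Category C] (F : C ⥤ C)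
    (e : ∀ X : C, Aut X ≃* kˣ)
    (he : ∀ (X Y : C) (u : X ≅ Y) (a : Aut X), e Y ((u.symm ≪≫ a) ≪≫ u) = e X a)
    (hF : ∀ (X : C) (a : Aut X), e (F.obj X) (F.mapIso a) = (e X a) ^ p)
    (L M : ℕ → C)
    (σ : ∀ n, F.obj (L (n + 1)) ≅ L n) (τ : ∀ n, F.obj (M (n + 1)) ≅ M n)
    (u : ∀ n, L n ≅ M n) :
    ∃ f : ∀ n, L n ≅ M n, ∀ n, F.mapIso (f (n + 1)) ≪≫ τ n = σ n ≪≫ f n :=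
  stmt_7_general p F e hF L M σ τ u
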